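/- For every positive integer n, the number of n×n partial Latin rectangles based on n symbols of size 4 satisfies 24·|R_{n,n,n:4}| = n³·(n−1)²·(n⁷ + 2n⁶ − 15n⁵ − 20n⁴ + 98n³ + 36n² − 288n + 198). -/

import Mathlib

open Finset

/-- `E` is (the entry set of) an `r × s` partial Latin rectangle based on `n` symbols:
no two distinct triples agree in both their first and second coordinates, in both their
first and third coordinates, or in both their second and third coordinates. -/
def IsPLR {r s n : ℕ} (E : Finset (Fin r × Fin s × Fin n)) : Prop :=
  ∀ e ∈ E, ∀ e' ∈ E, e ≠ e' →
    ¬(e.1 = e'.1 ∧ e.2.1 = e'.2.1) ∧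
    ¬(e.1 = e'.1 ∧ e.2.2 = e'.2.2) ∧
    ¬(e.2.1 = e'.2.1 ∧ e.2.2 = e'.2.2)

/-- The number of entries of `E` in row `i`. -/
def rowType {r s n : ℕ} (E : Finset (Fin r × Fin s × Fin n)) (i : Fin r) : ℕ :=
  (E.filter (fun e => e.1 = i)).card

/-- The number of entries of `E` in column `j`. -/
def colType {r s n : ℕ} (E : Finset (Fin r × Fin s × Fin n)) (j : Fin s) : ℕ :=
  (E.filter (fun e => e.2.1 = j)).card

/-- The number of occurrences of symbol `k` in `E`. -/
def symType {r s n : ℕ} (E : Finset (Fin r × Fin s × Fin n)) (k : Fin n) : ℕ :=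
  (E.filter (fun e => e.2.2 = k)).card

/-- The number of `r × s` partial Latin rectangles based on `n` symbols of size `m`. -/
noncomputable def numPLR (r s n m : ℕ) : ℕ :=
  Nat.card {E : Finset (Fin r × Fin s × Fin n) // IsPLR E ∧ E.card = m}


/-!
Counting ordered 4-tuples of entries instead of 4-element sets multiplies by `4! = 24`.
An ordered tuple of entries is determined by the three partitions of its positions into
equal rows, equal columns and equal symbols, together with an injective labelling of the blocks
of each partition; the Latin conditions only depend on the partitions. Hence the number of tuples
is a sum of products `n^(a) n^(b) n^(c)` of falling factorials over the compatible triples of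
partitions of `Fin 4`, with `a, b, c` their numbers of blocks; these triples are enumerated by
computation.
-/

open Function
open scoped Nat

section KernelRepresentative

variable {k : ℕ} {α β : Type*} [DecidableEq α] [DecidableEq β]

/-- Sends each index to the least index carrying the same value, so that `kerRep r` is a canonical
representative of the partition of `Fin k` into the level sets of `r`. -/
def kerRep (r : Fin k → α) (i : Fin k) : Fin k :=
  Fin.find (fun j => r j = r i) ⟨i, rfl⟩

lemma apply_kerRep (r : Fin k → α) (i : Fin k) : r (kerRep r i) = r i :=
  Fin.find_spec (p := fun j => r j = r i) _

lemma kerRep_eq_kerRep_iff (r : Fin k → α) (i j : Fin k) :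
    kerRep r i = kerRep r j ↔ r i = r j := by
  refine ⟨fun h => by rw [← apply_kerRep r i, h, apply_kerRep r j], fun h => ?_⟩
  exact Fin.find_congr' (by simp [h])

lemma kerRep_eq_kerRep_iff_forall {u : Fin k → α} {w : Fin k → β} :
    kerRep u = kerRep w ↔ ∀ i j, u i = u j ↔ w i = w j := by
  refine ⟨fun h i j => ?_, fun h => funext fun i => Fin.find_congr' (h _ i)⟩
  rw [← kerRep_eq_kerRep_iff, h, kerRep_eq_kerRep_iff]

lemma kerRep_kerRep (r : Fin k → α) : kerRep (kerRep r) = kerRep r :=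
  kerRep_eq_kerRep_iff_forall.2 (kerRep_eq_kerRep_iff r)

lemma apply_apply_of_kerRep_eq {p : Fin k → Fin k} (hp : kerRep p = p) (i : Fin k) :
    p (p i) = p i := by
  have h := apply_kerRep p i
  rwa [hp] at h

/-- A map with the same level sets as `p` is an injection of the set of representatives
`image p` into the codomain, extended by constancy on the level sets. -/
lemma card_kerRep_eq [Fintype β] {p : Fin k → Fin k} (hp : kerRep p = p) :
    #{r : Fin k → β | kerRep r = p} = (Fintype.card β).descFactorial #(univ.image p) := by
  have hr {r : Fin k → β} (h : kerRep r = p) (i j : Fin k) : r i = r j ↔ p i = p j := by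
    rw [← kerRep_eq_kerRep_iff, h]
  have hpp := apply_apply_of_kerRep_eq hp
  have e : {r : Fin k → β // kerRep r = p} ≃ (univ.image p ↪ β) :=
    { toFun := fun r => ⟨fun x => r.1 x, by
        rintro ⟨_, hx⟩ ⟨_, hy⟩ h
        obtain ⟨i, -, rfl⟩ := mem_image.1 hx
        obtain ⟨j, -, rfl⟩ := mem_image.1 hy
        simpa [hr r.2, hpp] using h⟩
      invFun := fun g => ⟨fun i => g ⟨p i, mem_image_of_mem p (mem_univ i)⟩, by
        refine (kerRep_eq_kerRep_iff_forall.2 fun i j => ?_).trans hp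
        simp⟩
      left_inv := fun r => Subtype.ext <| funext fun i => (hr r.2 _ i).2 (hpp i)
      right_inv := fun g => by
        ext ⟨x, hx⟩
        obtain ⟨i, -, rfl⟩ := mem_image.1 hx
        exact congrArg g (Subtype.ext (hpp i)) }
  rw [← Fintype.card_subtype, Fintype.card_congr e, Fintype.card_embedding_eq,
    Fintype.card_coe]

end KernelRepresentative

instance {ι : Type*} [Fintype ι] [DecidableEq ι] (R : ι → ι → Prop) [DecidableRel R] :
    Decidable (Pairwise R) :=
  inferInstanceAs (Decidable (∀ i j, i ≠ j → R i j))

lemma injective_of_card_image_univ {ι α : Type*} [Fintype ι] [DecidableEq α] {f : ι → α}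
    (h : #(univ.image f) = Fintype.card ι) : Injective f := by
  rwa [← Set.injOn_univ, ← coe_univ, ← card_image_iff]

lemma card_filter_image_eq {m : ℕ} {α : Type*} [Fintype α] [DecidableEq α] {s : Finset α}
    (hs : #s = m) : #{f : Fin m → α | univ.image f = s} = m ! := by
  have hinj {f : Fin m → α} (hf : univ.image f = s) : Injective f :=
    injective_of_card_image_univ (by rw [hf, hs, Fintype.card_fin])
  have e : {f : Fin m → α // univ.image f = s} ≃ (Fin m ↪ s) :=
    { toFun := fun f => ⟨fun i => ⟨f.1 i, f.2.subst (motive := (f.1 i ∈ ·))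
          (mem_image_of_mem _ (mem_univ i))⟩, fun i j h => hinj f.2 (congrArg Subtype.val h)⟩
      invFun := fun g => ⟨fun i => g i, by
        refine eq_of_subset_of_card_le (fun x hx => ?_) ?_
        · obtain ⟨i, -, rfl⟩ := mem_image.1 hx
          exact (g i).2
        · rw [card_image_of_injective _ (f := fun i => (g i : α))
            (Subtype.val_injective.comp g.injective), card_univ, Fintype.card_fin, hs]⟩
      left_inv := fun _ => rfl
      right_inv := fun _ => rfl }
  rw [← Fintype.card_subtype, Fintype.card_congr e, Fintype.card_embedding_eq, Fintype.card_coe,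
    Fintype.card_fin, hs, Nat.descFactorial_self]

lemma card_injective_image {m : ℕ} {α : Type*} [Fintype α] [DecidableEq α]
    (P : Finset α → Prop) [DecidablePred P] :
    #{f : Fin m → α | Injective f ∧ P (univ.image f)} =
      m ! * #{s : Finset α | P s ∧ #s = m} := by
  have hmaps : ∀ f ∈ ({f | Injective f ∧ P (univ.image f)} : Finset (Fin m → α)),
      univ.image f ∈ ({s | P s ∧ #s = m} : Finset (Finset α)) := by
    intro f hf
    simp only [mem_filter, mem_univ, true_and] at hf ⊢
    exact ⟨hf.2, by rw [card_image_of_injective _ hf.1, card_univ, Fintype.card_fin]⟩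
  rw [card_eq_sum_card_fiberwise hmaps, mul_comm, ← smul_eq_mul, ← sum_const]
  refine sum_congr rfl fun s hs => ?_
  simp only [mem_filter, mem_univ, true_and] at hs
  rw [filter_filter, ← card_filter_image_eq hs.2]
  congr 1
  refine filter_congr fun f _ => ⟨And.right, fun hf => ⟨⟨?_, hf ▸ hs.1⟩, hf⟩⟩
  exact injective_of_card_image_univ (by rw [hf, hs.2, Fintype.card_fin])

section PLRTuple

variable {r s n : ℕ}

def PLRCompatible (e e' : Fin r × Fin s × Fin n) : Prop :=
  ¬(e.1 = e'.1 ∧ e.2.1 = e'.2.1) ∧ ¬(e.1 = e'.1 ∧ e.2.2 = e'.2.2) ∧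
    ¬(e.2.1 = e'.2.1 ∧ e.2.2 = e'.2.2)

instance : DecidableRel (@PLRCompatible r s n) := fun _ _ =>
  inferInstanceAs (Decidable (¬_ ∧ ¬_ ∧ ¬_))

instance : DecidablePred (@IsPLR r s n) := fun E =>
  inferInstanceAs (Decidable (∀ e ∈ E, ∀ e' ∈ E, e ≠ e' → PLRCompatible e e'))

lemma isPLR_iff_pairwise_compatible (E : Finset (Fin r × Fin s × Fin n)) :
    IsPLR E ↔ (E : Set (Fin r × Fin s × Fin n)).Pairwise PLRCompatible :=
  Iff.rfl

lemma pairwise_compatible_iff {m : ℕ} (f : Fin m → Fin r × Fin s × Fin n) :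
    Pairwise (PLRCompatible on f) ↔ Injective f ∧ IsPLR (univ.image f) := by
  rw [isPLR_iff_pairwise_compatible, coe_image, coe_univ, Set.image_univ]
  refine ⟨fun h => ⟨fun i j hij => ?_, h.range_pairwise⟩,
    fun ⟨hf, h⟩ => h.on_injective hf Set.mem_range_self⟩
  by_contra hne
  exact (h hne).1 ⟨congrArg Prod.fst hij, congrArg (·.2.1) hij⟩

lemma factorial_mul_numPLR (m : ℕ) :
    m ! * numPLR r s n m =
      #{f : Fin m → Fin r × Fin s × Fin n | Pairwise (PLRCompatible on f)} := by
  rw [numPLR, Nat.card_eq_fintype_card, Fintype.card_subtype, ← card_injective_image]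
  simp_rw [pairwise_compatible_iff]

end PLRTuple

section Patterns

variable {k r s n : ℕ}

abbrev PatternTriple (k : ℕ) := (Fin k → Fin k) × (Fin k → Fin k) × (Fin k → Fin k)

def zip3 {α β γ : Type*} (p : (Fin k → α) × (Fin k → β) × (Fin k → γ)) (i : Fin k) :
    α × β × γ :=
  (p.1 i, p.2.1 i, p.2.2 i)

def unzip3 {α β γ : Type*} (f : Fin k → α × β × γ) :
    (Fin k → α) × (Fin k → β) × (Fin k → γ) :=
  (fun i => (f i).1, fun i => (f i).2.1, fun i => (f i).2.2)

/-- The row, column and symbol partitions of the positions `Fin k` of a tuple of entries. -/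
def kerRep3 (f : Fin k → Fin r × Fin s × Fin n) : PatternTriple k :=
  (kerRep (unzip3 f).1, kerRep (unzip3 f).2.1, kerRep (unzip3 f).2.2)

def kernelPatterns (k : ℕ) : Finset (Fin k → Fin k) := {p | kerRep p = p}

def compatiblePatterns (k : ℕ) : Finset (PatternTriple k) :=
  {p ∈ kernelPatterns k ×ˢ kernelPatterns k ×ˢ kernelPatterns k |
    Pairwise (PLRCompatible on zip3 p)}

def blockCounts (p : PatternTriple k) : ℕ × ℕ × ℕ :=
  (#(univ.image p.1), #(univ.image p.2.1), #(univ.image p.2.2))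

lemma pairwise_compatible_iff_kerRep3 (f : Fin k → Fin r × Fin s × Fin n) :
    Pairwise (PLRCompatible on f) ↔ Pairwise (PLRCompatible on zip3 (kerRep3 f)) := by
  simp only [Pairwise, onFun, PLRCompatible, zip3, kerRep3, unzip3, kerRep_eq_kerRep_iff]

lemma kerRep3_mem_compatiblePatterns {f : Fin k → Fin r × Fin s × Fin n}
    (hf : Pairwise (PLRCompatible on f)) : kerRep3 f ∈ compatiblePatterns k := by
  simp only [compatiblePatterns, kernelPatterns, mem_filter, mem_product, mem_univ, true_and,
    kerRep3, kerRep_kerRep, and_self]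
  exact (pairwise_compatible_iff_kerRep3 f).1 hf

lemma card_kerRep3_eq {p : PatternTriple k} (hp : p ∈ compatiblePatterns k) :
    #{f : Fin k → Fin r × Fin s × Fin n | kerRep3 f = p} =
      r.descFactorial (blockCounts p).1 * s.descFactorial (blockCounts p).2.1 *
        n.descFactorial (blockCounts p).2.2 := by
  simp only [compatiblePatterns, kernelPatterns, mem_filter, mem_product, mem_univ, true_and] at hp
  obtain ⟨⟨h₁, h₂, h₃⟩, -⟩ := hp
  have : #{f : Fin k → Fin r × Fin s × Fin n | kerRep3 f = p} =
      #(({a | kerRep a = p.1} : Finset (Fin k → Fin r)) ×ˢ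
        ({b | kerRep b = p.2.1} : Finset (Fin k → Fin s)) ×ˢ
        ({c | kerRep c = p.2.2} : Finset (Fin k → Fin n))) := by
    refine card_nbij' unzip3 zip3 ?_ ?_ (fun _ _ => rfl) (fun _ _ => rfl)
    · intro f hf
      simp only [coe_filter, mem_univ, true_and, Set.mem_ofPred_eq, coe_product,
        Set.mem_prod] at hf ⊢
      subst hf
      exact ⟨rfl, rfl, rfl⟩
    · intro f hf
      simp only [coe_filter, mem_univ, true_and, Set.mem_ofPred_eq, coe_product,
        Set.mem_prod] at hf ⊢
      exact Prod.ext hf.1 (Prod.ext hf.2.1 hf.2.2)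
  rw [this, card_product, card_product, card_kerRep_eq h₁, card_kerRep_eq h₂,
    card_kerRep_eq h₃, Fintype.card_fin, Fintype.card_fin, Fintype.card_fin, mul_assoc]
  rfl

lemma card_pairwise_compatible :
    #{f : Fin k → Fin r × Fin s × Fin n | Pairwise (PLRCompatible on f)} =
      ∑ p ∈ compatiblePatterns k, r.descFactorial (blockCounts p).1 *
        s.descFactorial (blockCounts p).2.1 * n.descFactorial (blockCounts p).2.2 := by
  rw [card_eq_sum_card_fiberwise (f := kerRep3) (t := compatiblePatterns k)
    fun f hf => kerRep3_mem_compatiblePatterns (mem_filter.1 hf).2]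
  refine sum_congr rfl fun p hp => ?_
  rw [← card_kerRep3_eq hp, filter_filter]
  congr 1
  refine filter_congr fun f _ => ⟨And.right, fun hf => ⟨?_, hf⟩⟩
  rw [pairwise_compatible_iff_kerRep3, hf]
  exact (mem_filter.1 hp).2

end Patterns

open Multiset in
lemma blockCounts_compatiblePatterns_four :
    (compatiblePatterns 4).val.map blockCounts =
      replicate 1 (1, 4, 4) + replicate 1 (4, 1, 4) + replicate 1 (4, 4, 1) +
      replicate 6 (2, 2, 2) + replicate 12 (2, 2, 3) + replicate 6 (2, 2, 4) +
      replicate 12 (2, 3, 2) + replicate 60 (2, 3, 3) + replicate 24 (2, 3, 4) +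
      replicate 6 (2, 4, 2) + replicate 24 (2, 4, 3) + replicate 7 (2, 4, 4) +
      replicate 12 (3, 2, 2) + replicate 60 (3, 2, 3) + replicate 24 (3, 2, 4) +
      replicate 60 (3, 3, 2) + replicate 120 (3, 3, 3) + replicate 30 (3, 3, 4) +
      replicate 24 (3, 4, 2) + replicate 30 (3, 4, 3) + replicate 6 (3, 4, 4) +
      replicate 6 (4, 2, 2) + replicate 24 (4, 2, 3) + replicate 7 (4, 2, 4) +
      replicate 24 (4, 3, 2) + replicate 30 (4, 3, 3) + replicate 6 (4, 3, 4) +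
      replicate 7 (4, 4, 2) + replicate 6 (4, 4, 3) + replicate 1 (4, 4, 4) := by
  decide +kernel

lemma card_pairwise_compatible_four (n : ℕ) :
    (#{f : Fin 4 → Fin n × Fin n × Fin n | Pairwise (PLRCompatible on f)} : ℤ) =
      n ^ 3 * (n - 1) ^ 2 * (n ^ 7 + 2 * n ^ 6 - 15 * n ^ 5 - 20 * n ^ 4 + 98 * n ^ 3 +
        36 * n ^ 2 - 288 * n + 198) := by
  rw [card_pairwise_compatible, sum_eq_multiset_sum, ← comp_def (fun y : ℕ × ℕ × ℕ =>
    n.descFactorial y.1 * n.descFactorial y.2.1 * n.descFactorial y.2.2) blockCounts,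
    ← Multiset.map_map, blockCounts_compatiblePatterns_four]
  simp only [Multiset.map_add, Multiset.sum_add, Multiset.map_replicate, Multiset.sum_replicate,
    smul_eq_mul]
  push_cast [← descPochhammer_eval_eq_descFactorial]
  simp only [descPochhammer_succ_eval, descPochhammer_zero, Polynomial.eval_one]
  ring

theorem stmt11_general (n : ℕ) :
    (24 : ℤ) * numPLR n n n 4 = (n : ℤ) ^ 3 * ((n : ℤ) - 1) ^ 2 * ((n : ℤ) ^ 7 + 2 * (n : ℤ) ^ 6 - 15 * (n : ℤ) ^ 5 - 20 * (n : ℤ) ^ 4 + 98 * (n : ℤ) ^ 3 + 36 * (n : ℤ) ^ 2 - 288 * (n : ℤ) + 198) := by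
  rw [← card_pairwise_compatible_four, ← factorial_mul_numPLR]
  push_cast
  rfl

theorem stmt11 (n : ℕ) (hn : 0 < n) :
    (24 : ℤ) * numPLR n n n 4 = (n : ℤ) ^ 3 * ((n : ℤ) - 1) ^ 2 * ((n : ℤ) ^ 7 + 2 * (n : ℤ) ^ 6 - 15 * (n : ℤ) ^ 5 - 20 * (n : ℤ) ^ 4 + 98 * (n : ℤ) ^ 3 + 36 * (n : ℤ) ^ 2 - 288 * (n : ℤ) + 198) :=
  stmt11_general n
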